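/- For any two discrete probability distributions D and D' on a countable set with equal support such that D_∞(D‖D') ≤ ε and D_∞(D'‖D) ≤ ε, the KL divergence satisfies D_KL(D‖D') ≤ ε·(e^ε − 1)/2. -/

import Mathlib

/-!
Testing the max-divergence bounds on singletons pins every likelihood ratio `u = P x / Q x`
to `[e^{-ε}, e^ε]`. On that interval the convex function `u ↦ u log u` lies below its chord,
the affine function `u ↦ ε (cosh ε · u - 1) / sinh ε`. Multiplying by `Q x` and summing over
`x`, where `P` and `Q` both have total mass one, gives
`D_KL(P‖Q) ≤ ε (cosh ε - 1) / sinh ε = ε (e^ε - 1) / (e^ε + 1) ≤ ε (e^ε - 1) / 2`.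
-/

open scoped ENNReal

/-- The probability that a discrete distribution `P` assigns to a set `S`. -/
noncomputable def pmfProb {α : Type*} (P : PMF α) (S : Set α) : ℝ≥0∞ :=
  ∑' x, S.indicator (fun y => P y) x

/-- The (exponentiated) max divergence `exp (D_∞(P‖Q)) = sup_S P(S)/Q(S)`;
`D_∞(P‖Q) ≤ ε` is expressed as `DinfExp P Q ≤ ENNReal.ofReal (exp ε)`. -/
noncomputable def DinfExp {α : Type*} (P Q : PMF α) : ℝ≥0∞ :=
  ⨆ S : Set α, pmfProb P S / pmfProb Q S

/-- The KL divergence `D_KL(P‖Q) = Σ_x P(x) ln (P(x)/Q(x))`. -/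
noncomputable def KL {α : Type*} (P Q : PMF α) : ℝ :=
  ∑' x, (P x).toReal * Real.log ((P x).toReal / (Q x).toReal)

open Real

lemma pmfProb_singleton {α : Type*} (P : PMF α) (x : α) : pmfProb P {x} = P x := by
  rw [pmfProb, tsum_eq_single x fun y hy =>
    Set.indicator_of_notMem (Set.mem_singleton_iff.not.mpr hy) _]
  simp

lemma apply_le_mul_of_DinfExp_le {α : Type*} {P Q : PMF α} {c : ℝ≥0∞} (hc : c ≠ ∞)
    (h : DinfExp P Q ≤ c) (x : α) : P x ≤ c * Q x := by
  have hx : P x / Q x ≤ c := by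
    simpa [DinfExp, pmfProb_singleton] using (le_iSup _ ({x} : Set α)).trans h
  exact (ENNReal.div_le_iff_le_mul (.inr hc) (.inl (Q.apply_ne_top x)) |>.mp hx)

lemma toReal_le_exp_mul_of_DinfExp_le {α : Type*} {P Q : PMF α} {ε : ℝ}
    (h : DinfExp P Q ≤ ENNReal.ofReal (exp ε)) (x : α) :
    (P x).toReal ≤ exp ε * (Q x).toReal := by
  have := ENNReal.toReal_mono (ENNReal.mul_ne_top ENNReal.ofReal_ne_top (Q.apply_ne_top x))
    (apply_le_mul_of_DinfExp_le ENNReal.ofReal_ne_top h x)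
  rwa [ENNReal.toReal_mul, ENNReal.toReal_ofReal (exp_pos ε).le] at this

namespace PMF

variable {α : Type*} (P : PMF α)

lemma summable_toReal : Summable fun x => (P x).toReal :=
  ENNReal.summable_toReal (P.tsum_coe ▸ ENNReal.one_ne_top)

lemma tsum_toReal : ∑' x, (P x).toReal = 1 := by
  rw [← ENNReal.tsum_toReal_eq P.apply_ne_top, P.tsum_coe, ENNReal.toReal_one]

end PMF

lemma ConvexOn.mul_le_secant {𝕜 : Type*} [Field 𝕜] [LinearOrder 𝕜] [IsStrictOrderedRing 𝕜]
    {s : Set 𝕜} {f : 𝕜 → 𝕜} (hf : ConvexOn 𝕜 s f) {x y z : 𝕜} (hx : x ∈ s) (hz : z ∈ s)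
    (hxy : x ≤ y) (hyz : y ≤ z) : (z - x) * f y ≤ (z - y) * f x + (y - x) * f z := by
  rcases hxy.eq_or_lt with rfl | hxy
  · simp
  rcases hyz.eq_or_lt with rfl | hyz
  · simp
  exact hf.secant_mono_aux1 hx hz hxy hyz

section RatioBounds

variable {ε p q : ℝ}

lemma exp_neg_le_div_of_le_exp_mul (hq : 0 < q) (h : q ≤ exp ε * p) : exp (-ε) ≤ p / q := by
  rwa [le_div_iff₀ hq, exp_neg, inv_mul_le_iff₀ (exp_pos ε)]

lemma abs_log_div_le_of_le_exp_mul (hε : 0 ≤ ε) (hq : 0 ≤ q)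
    (h₁ : p ≤ exp ε * q) (h₂ : q ≤ exp ε * p) : |log (p / q)| ≤ ε := by
  rcases hq.eq_or_lt with rfl | hq
  · simpa using hε
  have hp : 0 < p / q := (exp_pos _).trans_le (exp_neg_le_div_of_le_exp_mul hq h₂)
  rw [abs_le, le_log_iff_exp_le hp, log_le_iff_le_exp hp, div_le_iff₀ hq]
  exact ⟨exp_neg_le_div_of_le_exp_mul hq h₂, h₁⟩

lemma abs_mul_log_div_le (hε : 0 ≤ ε) (hp : 0 ≤ p) (hq : 0 ≤ q)
    (h₁ : p ≤ exp ε * q) (h₂ : q ≤ exp ε * p) : |p * log (p / q)| ≤ p * ε := by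
  rw [abs_mul, abs_of_nonneg hp]
  exact mul_le_mul_of_nonneg_left (abs_log_div_le_of_le_exp_mul hε hq h₁ h₂) hp

/-- The chord of `u ↦ u log u` between `e^{-ε}` and `e^ε`, homogenised by `q`. -/
lemma sinh_mul_mul_log_div_le (hq : 0 ≤ q) (h₁ : p ≤ exp ε * q) (h₂ : q ≤ exp ε * p) :
    sinh ε * (p * log (p / q)) ≤ ε * (cosh ε * p - q) := by
  rcases hq.eq_or_lt with rfl | hq
  · obtain rfl : p = 0 := by nlinarith [exp_pos ε]
    simp
  set u := p / q
  have hu₁ : exp (-ε) ≤ u := exp_neg_le_div_of_le_exp_mul hq h₂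
  have hu₂ : u ≤ exp ε := (div_le_iff₀ hq).mpr h₁
  have hsecant := convexOn_mul_log.mul_le_secant (Set.mem_Ici.mpr (exp_pos (-ε)).le)
    (Set.mem_Ici.mpr (exp_pos ε).le) hu₁ hu₂
  simp only [log_exp] at hsecant
  have hp : p = q * u := (mul_div_cancel₀ p hq.ne').symm
  have hexp : exp ε * exp (-ε) = 1 := by rw [← exp_add, add_neg_cancel, exp_zero]
  rw [sinh_eq, cosh_eq, hp]
  linear_combination (1 / 2) * mul_le_mul_of_nonneg_left hsecant hq.le - (q * ε) * hexp

end RatioBounds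

section KL

variable {α : Type*} {P Q : PMF α} {ε : ℝ}

lemma summable_mul_log_div (hε : 0 ≤ ε) (h₁ : ∀ x, (P x).toReal ≤ exp ε * (Q x).toReal)
    (h₂ : ∀ x, (Q x).toReal ≤ exp ε * (P x).toReal) :
    Summable fun x => (P x).toReal * log ((P x).toReal / (Q x).toReal) :=
  .of_norm_bounded (P.summable_toReal.mul_right ε) fun x =>
    abs_mul_log_div_le hε ENNReal.toReal_nonneg ENNReal.toReal_nonneg (h₁ x) (h₂ x)

lemma KL_le_of_le_exp_mul (hε : 0 ≤ ε) (h₁ : ∀ x, (P x).toReal ≤ exp ε * (Q x).toReal)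
    (h₂ : ∀ x, (Q x).toReal ≤ exp ε * (P x).toReal) : KL P Q ≤ ε :=
  calc KL P Q ≤ ∑' x, (P x).toReal * ε :=
        (summable_mul_log_div hε h₁ h₂).tsum_le_tsum (fun x => (le_abs_self _).trans <|
          abs_mul_log_div_le hε ENNReal.toReal_nonneg ENNReal.toReal_nonneg (h₁ x) (h₂ x))
          (P.summable_toReal.mul_right ε)
    _ = ε := by rw [tsum_mul_right, P.tsum_toReal, one_mul]

lemma KL_le_cosh_sub_one_div_sinh (hε : 0 < ε)
    (h₁ : ∀ x, (P x).toReal ≤ exp ε * (Q x).toReal)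
    (h₂ : ∀ x, (Q x).toReal ≤ exp ε * (P x).toReal) :
    KL P Q ≤ ε * (cosh ε - 1) / sinh ε := by
  rw [le_div_iff₀ (sinh_pos_iff.mpr hε), mul_comm, KL, ← tsum_mul_left]
  calc ∑' x, sinh ε * ((P x).toReal * log ((P x).toReal / (Q x).toReal))
      ≤ ∑' x, ε * (cosh ε * (P x).toReal - (Q x).toReal) :=
        ((summable_mul_log_div hε.le h₁ h₂).mul_left _).tsum_le_tsum
          (fun x => sinh_mul_mul_log_div_le ENNReal.toReal_nonneg (h₁ x) (h₂ x))
          (((P.summable_toReal.mul_left _).sub Q.summable_toReal).mul_left ε)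
    _ = ε * (cosh ε - 1) := by
      rw [tsum_mul_left, (P.summable_toReal.mul_left _).tsum_sub Q.summable_toReal,
        tsum_mul_left, P.tsum_toReal, Q.tsum_toReal, mul_one]

end KL

lemma cosh_sub_one_div_sinh_le {x : ℝ} (hx : 0 < x) :
    (cosh x - 1) / sinh x ≤ (exp x - 1) / 2 := by
  have hexp : exp x * exp (-x) = 1 := by rw [← exp_add, add_neg_cancel, exp_zero]
  have hx1 : 1 ≤ exp x := one_le_exp hx.le
  rw [div_le_div_iff₀ (sinh_pos_iff.mpr hx) two_pos, sinh_eq, cosh_eq]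
  nlinarith [pow_nonneg (sub_nonneg.mpr hx1) 3, exp_pos (-x)]

theorem kl_le_half_general {α : Type*} (D D' : PMF α) (ε : ℝ) (hε : 0 ≤ ε)
    (h1 : DinfExp D D' ≤ ENNReal.ofReal (Real.exp ε))
    (h2 : DinfExp D' D ≤ ENNReal.ofReal (Real.exp ε)) :
    KL D D' ≤ ε * (Real.exp ε - 1) / 2 := by
  have hpq := toReal_le_exp_mul_of_DinfExp_le h1
  have hqp := toReal_le_exp_mul_of_DinfExp_le h2
  rcases hε.eq_or_lt with rfl | hε
  · simpa using KL_le_of_le_exp_mul le_rfl hpq hqp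
  calc KL D D' ≤ ε * (cosh ε - 1) / sinh ε := KL_le_cosh_sub_one_div_sinh hε hpq hqp
    _ ≤ ε * (exp ε - 1) / 2 := by
      rw [mul_div_assoc, mul_div_assoc]
      exact mul_le_mul_of_nonneg_left (cosh_sub_one_div_sinh_le hε) hε.le

/-- **Sharp KL bound for bounded max divergence.** For any two discrete distributions
`D, D'` on a countable set with equal support such that `D_∞(D‖D') ≤ ε` and
`D_∞(D'‖D) ≤ ε`, the KL divergence satisfies `D_KL(D‖D') ≤ ε (e^ε − 1)/2`. -/
theorem kl_le_half {α : Type*} [Countable α] (D D' : PMF α) (ε : ℝ) (hε : 0 ≤ ε)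
    (hsupp : D.support = D'.support)
    (h1 : DinfExp D D' ≤ ENNReal.ofReal (Real.exp ε))
    (h2 : DinfExp D' D ≤ ENNReal.ofReal (Real.exp ε)) :
    KL D D' ≤ ε * (Real.exp ε - 1) / 2 :=
  kl_le_half_general D D' ε hε h1 h2
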